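/- arXiv:1702.06226 — 3 statements merged into one kernel-verified Lean document; each statement's English description precedes it below -/
import Mathlib

section
/- In the discrete Itô setting (see context), the full sums A_m = Σ_{k=1}^m Im(e^{−iΦ_k}G_k)·R_k and B_m = Σ_{k=1}^m Re(e^{−iΦ_k}G_k)·S_k satisfy E[A_m · B_m] = 0. -/
/-!
Split each complex noise `G k` into its two real coordinates `(re, im)`, indexed by
`(k, true)` and `(k, false)`: these `2m` coordinates are independent and centred with a common
second moment `σ²`. Because `e^{-iΦ_k}` acts on `G k` as the rotation by `-Φ_k`, both `A_m` and
`B_m` are martingale transforms `∑ k, ∑ b, ξ (k, b) * α k b` of the coordinates, with coefficients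
`α k b` that are bounded and measurable with respect to the coordinates of index `< k`. The
polarized discrete Itô isometry then gives `E[A_m B_m] = σ² ∑ k E[∑ b, α k b * β k b]`, and each
`∑ b, α k b * β k b` is `R_k S_k` times the inner product of the two rows of a rotation, which is 0.
-/

open MeasureTheory ProbabilityTheory
open scoped NNReal ENNReal

namespace ProbabilityTheory

variable {Ω ι : Type*}

abbrev coordSigma [MeasurableSpace Ω] (ξ : ι → Ω → ℝ) (T : Set ι) : MeasurableSpace Ω :=
  ⨆ i ∈ T, MeasurableSpace.comap (ξ i) inferInstance

section coordSigma

variable {mΩ : MeasurableSpace Ω} {ξ : ι → Ω → ℝ}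

lemma coordSigma_le (hξ : ∀ i, Measurable (ξ i)) (T : Set ι) : coordSigma ξ T ≤ mΩ :=
  iSup₂_le fun i _ => (hξ i).comap_le

lemma coordSigma_mono {T T' : Set ι} (h : T ⊆ T') : coordSigma ξ T ≤ coordSigma ξ T' :=
  biSup_mono h

lemma measurable_coordSigma {T : Set ι} {i : ι} (hi : i ∈ T) :
    Measurable[coordSigma ξ T] (ξ i) :=
  measurable_iff_comap_le.mpr (le_biSup (fun j => MeasurableSpace.comap (ξ j) inferInstance) hi)

variable {P : Measure Ω}

lemma iIndepFun.indepFun_of_measurable_coordSigma_compl (hξ : ∀ i, Measurable (ξ i))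
    (hind : iIndepFun ξ P) {i : ι} {U : Ω → ℝ} (hU : Measurable[coordSigma ξ {i}ᶜ] U) :
    IndepFun (ξ i) U P := by
  have h := indep_iSup_of_disjoint (fun j => (hξ j).comap_le) hind
    (disjoint_compl_right (a := ({i} : Set ι)))
  simp only [Set.mem_singleton_iff, iSup_iSup_eq_left] at h
  exact indep_of_indep_of_le_right h (measurable_iff_comap_le.mp hU)

lemma integral_mul_eq_zero_of_measurable_coordSigma_compl (hξ : ∀ i, Measurable (ξ i))
    (hind : iIndepFun ξ P) {i : ι} (hmean : ∫ ω, ξ i ω ∂P = 0) {U : Ω → ℝ}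
    (hU : Measurable[coordSigma ξ {i}ᶜ] U) :
    ∫ ω, ξ i ω * U ω ∂P = 0 := by
  have := (hind.indepFun_of_measurable_coordSigma_compl hξ hU).integral_mul_eq_mul_integral
    (hξ i).aestronglyMeasurable (hU.mono (coordSigma_le hξ _) le_rfl).aestronglyMeasurable
  simpa [hmean] using this

end coordSigma

section Isometry

variable {J : Type*} {mΩ : MeasurableSpace Ω} {P : Measure Ω} [LinearOrder ι]
  {ξ : ι × J → Ω → ℝ} {σ2 : ℝ}

lemma coordSigma_fst_lt_le_compl {k : ι} {p : ι × J} (h : k ≤ p.1) :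
    coordSigma ξ {r | r.1 < k} ≤ coordSigma ξ {p}ᶜ :=
  coordSigma_mono fun r (hr : r.1 < k) (hrp : r = p) => (hrp ▸ hr).not_ge h

lemma integral_coord_mul_coord_mul_eq_ite [DecidableEq J] (hξ : ∀ p, Measurable (ξ p))
    (hind : iIndepFun ξ P) (hmean : ∀ p, ∫ ω, ξ p ω ∂P = 0)
    (hvar : ∀ p, ∫ ω, ξ p ω ^ 2 ∂P = σ2) (p q : ι × J) {U : Ω → ℝ}
    (hU : Measurable[coordSigma ξ {r | r.1 < max p.1 q.1}] U) :
    ∫ ω, ξ p ω * ξ q ω * U ω ∂P = if p = q then σ2 * ∫ ω, U ω ∂P else 0 := by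
  split_ifs with hpq
  · subst hpq
    rw [max_self] at hU
    have hindep : IndepFun (fun ω => ξ p ω ^ 2) U P :=
      (hind.indepFun_of_measurable_coordSigma_compl hξ
        (hU.mono (coordSigma_fst_lt_le_compl le_rfl) le_rfl)).comp
        (measurable_id.pow_const 2) measurable_id
    calc ∫ ω, ξ p ω * ξ p ω * U ω ∂P = ∫ ω, ξ p ω ^ 2 * U ω ∂P := by simp only [sq]
      _ = σ2 * ∫ ω, U ω ∂P := by
        rw [← hvar p]
        exact hindep.integral_mul_eq_mul_integral ((hξ p).pow_const 2).aestronglyMeasurable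
          (hU.mono (coordSigma_le hξ _) le_rfl).aestronglyMeasurable
  wlog hle : p.1 ≤ q.1 generalizing p q
  · rw [max_comm] at hU
    simpa only [mul_comm (ξ p _)] using this q p hU (Ne.symm hpq) (le_of_not_ge hle)
  rw [max_eq_right hle] at hU
  calc ∫ ω, ξ p ω * ξ q ω * U ω ∂P = ∫ ω, ξ q ω * (ξ p ω * U ω) ∂P := by
        simp only [mul_left_comm, mul_assoc]
    _ = 0 := integral_mul_eq_zero_of_measurable_coordSigma_compl hξ hind (hmean q)
        ((measurable_coordSigma hpq).mul (hU.mono (coordSigma_fst_lt_le_compl le_rfl) le_rfl))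

/-- The polarized discrete Itô isometry for transforms of a multichannel noise. -/
theorem integral_sum_mul_sum_eq [IsFiniteMeasure P] [Fintype J] (hξ : ∀ p, Measurable (ξ p))
    (hind : iIndepFun ξ P) (hmean : ∀ p, ∫ ω, ξ p ω ∂P = 0) (hL2 : ∀ p, MemLp (ξ p) 2 P)
    (hvar : ∀ p, ∫ ω, ξ p ω ^ 2 ∂P = σ2) {α β : ι → J → Ω → ℝ}
    (hα : ∀ k j, Measurable[coordSigma ξ {r | r.1 < k}] (α k j))
    (hβ : ∀ k j, Measurable[coordSigma ξ {r | r.1 < k}] (β k j))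
    (hαb : ∀ k j, MemLp (α k j) ∞ P) (hβb : ∀ k j, MemLp (β k j) ∞ P) (s : Finset ι) :
    ∫ ω, (∑ k ∈ s, ∑ j, ξ (k, j) ω * α k j ω) * (∑ k ∈ s, ∑ j, ξ (k, j) ω * β k j ω) ∂P
      = σ2 * ∑ k ∈ s, ∫ ω, ∑ j, α k j ω * β k j ω ∂P := by
  classical
  have hX : ∀ p : ι × J, MemLp (fun ω => ξ p ω * α p.1 p.2 ω) 2 P :=
    fun p => (hαb p.1 p.2).mul' (hL2 p)
  have hY : ∀ p : ι × J, MemLp (fun ω => ξ p ω * β p.1 p.2 ω) 2 P :=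
    fun p => (hβb p.1 p.2).mul' (hL2 p)
  have hXY : ∀ p q : ι × J,
      Integrable (fun ω => ξ p ω * α p.1 p.2 ω * (ξ q ω * β q.1 q.2 ω)) P :=
    fun p q => (hX p).integrable_mul (hY q)
  have hαβ : ∀ k j, Integrable (fun ω => α k j ω * β k j ω) P :=
    fun k j => ((hβb k j).mul' (hαb k j)).integrable le_top
  have hterm : ∀ p q : ι × J, ∫ ω, ξ p ω * α p.1 p.2 ω * (ξ q ω * β q.1 q.2 ω) ∂P
      = if p = q then σ2 * ∫ ω, α p.1 p.2 ω * β q.1 q.2 ω ∂P else 0 := by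
    intro p q
    have hU : Measurable[coordSigma ξ {r | r.1 < max p.1 q.1}]
        fun ω => α p.1 p.2 ω * β q.1 q.2 ω :=
      ((hα p.1 p.2).mono (coordSigma_mono fun r (hr : r.1 < p.1) => lt_max_of_lt_left hr)
        le_rfl).mul
      ((hβ q.1 q.2).mono (coordSigma_mono fun r (hr : r.1 < q.1) => lt_max_of_lt_right hr)
        le_rfl)
    rw [← integral_coord_mul_coord_mul_eq_ite hξ hind hmean hvar p q hU]
    congr 1 with ω
    ring
  simp_rw [← Finset.sum_product' s Finset.univ, Finset.sum_mul_sum]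
  simp only [Prod.mk.eta]
  rw [integral_finsetSum _ fun p _ => integrable_finsetSum _ fun q _ => hXY p q]
  simp_rw [integral_finsetSum _ fun q _ => hXY _ q, hterm, Finset.sum_ite_eq,
    integral_finsetSum _ fun j _ => hαβ _ j, Finset.mul_sum]
  rw [← Finset.sum_product' s Finset.univ]
  exact Finset.sum_congr rfl fun p hp => if_pos hp

end Isometry

lemma HasLaw.memLp {mΩ : MeasurableSpace Ω} {𝓧 : Type*} {m𝓧 : MeasurableSpace 𝓧}
    {μ : Measure 𝓧} {X : Ω → 𝓧} {f : 𝓧 → ℝ} {P : Measure Ω} {p : ℝ≥0∞} (hX : HasLaw X μ P)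
    (hf : MemLp f p μ) : MemLp (f ∘ X) p P := by
  rw [← hX.map_eq] at hf
  exact (memLp_map_measure_iff hf.aestronglyMeasurable hX.aemeasurable).mp hf

end ProbabilityTheory

lemma MeasureTheory.memLp_top_comp_mul {Ω : Type*} {m mΩ : MeasurableSpace Ω} {P : Measure Ω}
    {f : ℝ → ℝ} (hf : Measurable f) (hf1 : ∀ x, |f x| ≤ 1) (hm : m ≤ mΩ) {φ r : Ω → ℝ}
    (hφ : Measurable[m] φ) (hr : Measurable[m] r) (hrb : ∃ C, ∀ᵐ ω ∂P, |r ω| ≤ C) :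
    MemLp (fun ω => f (φ ω) * r ω) ∞ P := by
  obtain ⟨C, hC⟩ := hrb
  refine memLp_top_of_bound (((hf.comp hφ).mul hr).mono hm le_rfl).aestronglyMeasurable C ?_
  filter_upwards [hC] with ω hω
  rw [Real.norm_eq_abs, abs_mul]
  exact (mul_le_of_le_one_left (abs_nonneg _) (hf1 _)).trans hω

namespace Complex

lemma re_exp_neg_ofReal_mul_I_mul (φ : ℝ) (z : ℂ) :
    (exp (-(φ : ℂ) * I) * z).re = z.re * Real.cos φ + z.im * Real.sin φ := by
  rw [← ofReal_neg, mul_re, exp_ofReal_mul_I_re, exp_ofReal_mul_I_im, Real.cos_neg, Real.sin_neg]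
  ring

lemma im_exp_neg_ofReal_mul_I_mul (φ : ℝ) (z : ℂ) :
    (exp (-(φ : ℂ) * I) * z).im = z.re * -Real.sin φ + z.im * Real.cos φ := by
  rw [← ofReal_neg, mul_im, exp_ofReal_mul_I_re, exp_ofReal_mul_I_im, Real.cos_neg, Real.sin_neg]
  ring

end Complex

/-- The rows of the rotation `z ↦ e^{-iφ} z` in the real coordinates `true ↦ re`,
`false ↦ im` of `z`. -/
noncomputable def rotRe (φ : ℝ) : Bool → ℝ
  | true => Real.cos φ
  | false => Real.sin φ

noncomputable def rotIm (φ : ℝ) : Bool → ℝ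
  | true => -Real.sin φ
  | false => Real.cos φ

lemma measurable_rotRe (b : Bool) : Measurable fun φ => rotRe φ b := by
  cases b
  exacts [Real.measurable_sin, Real.measurable_cos]

lemma measurable_rotIm (b : Bool) : Measurable fun φ => rotIm φ b := by
  cases b
  exacts [Real.measurable_cos, Real.measurable_sin.neg]

lemma abs_rotRe_le_one (φ : ℝ) (b : Bool) : |rotRe φ b| ≤ 1 := by
  cases b
  exacts [Real.abs_sin_le_one φ, Real.abs_cos_le_one φ]

lemma abs_rotIm_le_one (φ : ℝ) (b : Bool) : |rotIm φ b| ≤ 1 := by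
  cases b
  exacts [Real.abs_cos_le_one φ, (abs_neg _).trans_le (Real.abs_sin_le_one φ)]

lemma sum_rotIm_mul_rotRe (φ : ℝ) : ∑ b, rotIm φ b * rotRe φ b = 0 := by
  simp only [Fintype.sum_bool, rotIm, rotRe]
  ring

section ComplexNoise

variable {Ω : Type*} {mΩ : MeasurableSpace Ω} {m : ℕ} {G : ℕ → Ω → ℂ}

def reImCoords (m : ℕ) (G : ℕ → Ω → ℂ) (p : Fin m × Bool) (ω : Ω) : ℝ :=
  if p.2 then (G p.1 ω).re else (G p.1 ω).im

lemma measurable_reImCoords (hG : ∀ k, Measurable (G k)) (p : Fin m × Bool) :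
    Measurable (reImCoords m G p) := by
  unfold reImCoords
  split_ifs
  exacts [Complex.measurable_re.comp (hG _), Complex.measurable_im.comp (hG _)]

lemma measurable_coordSigma_reImCoords {j : ℕ} {k : Fin m} (hjk : j < k) :
    Measurable[coordSigma (reImCoords m G) {r | r.1 < k}] (G j) := by
  have hj : j < m := hjk.trans k.2
  exact @measurable_of_re_im _ ℂ _ (coordSigma (reImCoords m G) {r | r.1 < k}) _
    (measurable_coordSigma (i := ((⟨j, hj⟩ : Fin m), true)) (show (⟨j, hj⟩ : Fin m) < k from hjk))
    (measurable_coordSigma (i := ((⟨j, hj⟩ : Fin m), false)) (show (⟨j, hj⟩ : Fin m) < k from hjk))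

lemma iSup_comap_le_coordSigma_reImCoords (k : Fin m) :
    ⨆ j ∈ Finset.range k, MeasurableSpace.comap (G j) inferInstance
      ≤ coordSigma (reImCoords m G) {r | r.1 < k} :=
  iSup₂_le fun _ hj => (measurable_coordSigma_reImCoords (Finset.mem_range.mp hj)).comap_le

lemma sum_reImCoords_mul_rotRe (k : Fin m) (φ : ℝ) (ω : Ω) :
    ∑ b, reImCoords m G (k, b) ω * rotRe φ b
      = (Complex.exp (-(φ : ℂ) * Complex.I) * G k ω).re := by
  rw [Complex.re_exp_neg_ofReal_mul_I_mul]
  simp [reImCoords, rotRe]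

lemma sum_reImCoords_mul_rotIm (k : Fin m) (φ : ℝ) (ω : Ω) :
    ∑ b, reImCoords m G (k, b) ω * rotIm φ b
      = (Complex.exp (-(φ : ℂ) * Complex.I) * G k ω).im := by
  rw [Complex.im_exp_neg_ofReal_mul_I_mul]
  simp [reImCoords, rotIm]

end ComplexNoise

theorem discrete_ito_AB_uncorrelated_general
    {Ω : Type*} [MeasurableSpace Ω] (P : Measure Ω) [IsProbabilityMeasure P]
    (m : ℕ) (v : ℝ≥0)
    (G : ℕ → Ω → ℂ) (hGmeas : ∀ k, Measurable (G k))
    (hindep : iIndepFun (m := fun _ : Fin m × Bool => (inferInstance : MeasurableSpace ℝ))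
      (fun p : Fin m × Bool => fun ω => if p.2 then (G p.1 ω).re else (G p.1 ω).im) P)
    (hlaw : ∀ p : Fin m × Bool,
      P.map (fun ω => if p.2 then (G p.1 ω).re else (G p.1 ω).im) = gaussianReal 0 v)
    (𝓕 : ℕ → MeasurableSpace Ω)
    (h𝓕 : ∀ k, 𝓕 k = ⨆ j ∈ Finset.range k,
      MeasurableSpace.comap (G j) (inferInstance : MeasurableSpace ℂ))
    (Φ R S : ℕ → Ω → ℝ)
    (hΦmeas : ∀ k < m, Measurable[𝓕 k] (Φ k))
    (hRmeas : ∀ k < m, Measurable[𝓕 k] (R k))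
    (hSmeas : ∀ k < m, Measurable[𝓕 k] (S k))
    (hRbdd : ∀ k < m, ∃ C : ℝ, ∀ᵐ ω ∂P, |R k ω| ≤ C)
    (hSbdd : ∀ k < m, ∃ C : ℝ, ∀ᵐ ω ∂P, |S k ω| ≤ C)
    (A B : ℕ → Ω → ℝ)
    (hA : ∀ n ω, A n ω =
      ∑ k ∈ Finset.range n, (Complex.exp (-(Φ k ω : ℂ) * Complex.I) * G k ω).im * R k ω)
    (hB : ∀ n ω, B n ω =
      ∑ k ∈ Finset.range n, (Complex.exp (-(Φ k ω : ℂ) * Complex.I) * G k ω).re * S k ω) :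
    ∫ ω, A m ω * B m ω ∂P = 0 := by
  have hξ : ∀ p, Measurable (reImCoords m G p) := measurable_reImCoords hGmeas
  have hξlaw : ∀ p, HasLaw (reImCoords m G p) (gaussianReal 0 v) P :=
    fun p => ⟨(hξ p).aemeasurable, hlaw p⟩
  have hpast : ∀ k : Fin m, 𝓕 k ≤ coordSigma (reImCoords m G) {r | r.1 < k} :=
    fun k => (h𝓕 k).trans_le (iSup_comap_le_coordSigma_reImCoords k)
  have hΦ (k : Fin m) := (hΦmeas k k.2).mono (hpast k) le_rfl
  have hR (k : Fin m) := (hRmeas k k.2).mono (hpast k) le_rfl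
  have hS (k : Fin m) := (hSmeas k k.2).mono (hpast k) le_rfl
  have hprod : ∀ ω, A m ω * B m ω
      = (∑ k : Fin m, ∑ b, reImCoords m G (k, b) ω * (rotIm (Φ k ω) b * R k ω))
        * ∑ k : Fin m, ∑ b, reImCoords m G (k, b) ω * (rotRe (Φ k ω) b * S k ω) := by
    intro ω
    simp only [hA, hB, Finset.sum_range, ← mul_assoc, ← Finset.sum_mul, sum_reImCoords_mul_rotIm,
      sum_reImCoords_mul_rotRe]
  rw [integral_congr_ae (ae_of_all _ hprod), integral_sum_mul_sum_eq hξ hindep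
    (α := fun k b ω => rotIm (Φ k ω) b * R k ω) (β := fun k b ω => rotRe (Φ k ω) b * S k ω)
    (fun p => by simp [(hξlaw p).integral_eq])
    (fun p => (hξlaw p).memLp (f := id) (by simpa using memLp_id_gaussianReal 2))
    (fun p => (hξlaw p).integral_comp (f := fun x => x ^ 2) (by fun_prop))
    (fun k b => ((measurable_rotIm b).comp (hΦ k)).mul (hR k))
    (fun k b => ((measurable_rotRe b).comp (hΦ k)).mul (hS k))
    (fun k b => memLp_top_comp_mul (measurable_rotIm b) (abs_rotIm_le_one · b)
      (coordSigma_le hξ _) (hΦ k) (hR k) (hRbdd k k.2))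
    (fun k b => memLp_top_comp_mul (measurable_rotRe b) (abs_rotRe_le_one · b)
      (coordSigma_le hξ _) (hΦ k) (hS k) (hSbdd k k.2))]
  simp only [mul_mul_mul_comm _ (R _ _), ← Finset.sum_mul, sum_rotIm_mul_rotRe, zero_mul,
    integral_zero, Finset.sum_const_zero, mul_zero]

/-- Discrete analogue of Theorem 2 of the paper: in the discrete Itô setting, the full sums
`A_m = Σ_{k<m} Im(e^{-iΦ_k}G_k)·R_k` and `B_m = Σ_{k<m} Re(e^{-iΦ_k}G_k)·S_k` (with
`Φ_k, R_k, S_k` essentially bounded and measurable with respect to the σ-algebra generated by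
the previous noises `G_0, …, G_{k-1}`) are uncorrelated: `E[A_m · B_m] = 0`. -/
theorem discrete_ito_AB_uncorrelated
    {Ω : Type*} [MeasurableSpace Ω] (P : Measure Ω) [IsProbabilityMeasure P]
    (m : ℕ) (v : ℝ≥0) (hv : 0 < v)
    (G : ℕ → Ω → ℂ) (hGmeas : ∀ k, Measurable (G k))
    (hindep : iIndepFun (m := fun _ : Fin m × Bool => (inferInstance : MeasurableSpace ℝ))
      (fun p : Fin m × Bool => fun ω => if p.2 then (G p.1 ω).re else (G p.1 ω).im) P)
    (hlaw : ∀ p : Fin m × Bool,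
      P.map (fun ω => if p.2 then (G p.1 ω).re else (G p.1 ω).im) = gaussianReal 0 v)
    (𝓕 : ℕ → MeasurableSpace Ω)
    (h𝓕 : ∀ k, 𝓕 k = ⨆ j ∈ Finset.range k,
      MeasurableSpace.comap (G j) (inferInstance : MeasurableSpace ℂ))
    (Φ R S : ℕ → Ω → ℝ)
    (hΦmeas : ∀ k < m, Measurable[𝓕 k] (Φ k))
    (hRmeas : ∀ k < m, Measurable[𝓕 k] (R k))
    (hSmeas : ∀ k < m, Measurable[𝓕 k] (S k))
    (hΦbdd : ∀ k < m, ∃ C : ℝ, ∀ᵐ ω ∂P, |Φ k ω| ≤ C)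
    (hRbdd : ∀ k < m, ∃ C : ℝ, ∀ᵐ ω ∂P, |R k ω| ≤ C)
    (hSbdd : ∀ k < m, ∃ C : ℝ, ∀ᵐ ω ∂P, |S k ω| ≤ C)
    (A B : ℕ → Ω → ℝ)
    (hA : ∀ n ω, A n ω =
      ∑ k ∈ Finset.range n, (Complex.exp (-(Φ k ω : ℂ) * Complex.I) * G k ω).im * R k ω)
    (hB : ∀ n ω, B n ω =
      ∑ k ∈ Finset.range n, (Complex.exp (-(Φ k ω : ℂ) * Complex.I) * G k ω).re * S k ω) :
    ∫ ω, A m ω * B m ω ∂P = 0 :=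
  discrete_ito_AB_uncorrelated_general P m v G hGmeas hindep hlaw 𝓕 h𝓕 Φ R S hΦmeas hRmeas hSmeas
    hRbdd hSbdd A B hA hB
end

section
/- In the discrete Itô setting (see context), for all 0 ≤ n ≤ m the partial sums satisfy the three increment-orthogonality identities: (1) E[A_n² · B_n · (B_m − B_n)] = 0; (2) E[A_n · B_n² · (A_m − A_n)] = 0; and (3) E[A_n · B_n · (A_m − A_n) · (B_m − B_n)] = 0. -/
/-!
Write `f k = Im (e^{-iΦ_k} G_k) R_k` and `g k = Re (e^{-iΦ_k} G_k) S_k` for the increments of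
`A` and `B`. The Gaussian `G_k` is independent of `𝓕_k`, centred and circular
(`E[Re G_k Im G_k] = 0`, `E[(Re G_k)²] = E[(Im G_k)²]`), and a rotation by the `𝓕_k`-measurable
phase `Φ_k` keeps it so. Hence `f k`, `g k` and `f k g k` integrate to zero against every
`𝓕_k`-measurable weight: `A` and `B` are strongly orthogonal martingales. Identities (1) and (2)
follow by expanding `B_m - B_n` and `A_m - A_n` into increments, and (3) by the discrete product
rule `(A_m - A_n)(B_m - B_n) = ∑_{n ≤ k < m} ((A_k - A_n) g_k + (B_k - B_n) f_k + f_k g_k)`.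
-/

open MeasureTheory ProbabilityTheory Finset
open scoped NNReal

lemma Finset.sum_Ico_mul_sum_Ico {R : Type*} [CommRing R] (f g : ℕ → R) {n m : ℕ} (hnm : n ≤ m) :
    (∑ k ∈ Ico n m, f k) * (∑ k ∈ Ico n m, g k) =
      ∑ k ∈ Ico n m, ((∑ j ∈ Ico n k, f j) * g k + (∑ j ∈ Ico n k, g j) * f k + f k * g k) := by
  induction m, hnm using Nat.le_induction with
  | base => simp
  | succ m hnm ih =>
    rw [sum_Ico_succ_top hnm, sum_Ico_succ_top hnm, sum_Ico_succ_top hnm, ← ih]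
    ring

namespace Complex

lemma re_exp_neg_mul_I_mul (φ : ℝ) (z : ℂ) :
    (exp (-φ * I) * z).re = Real.cos φ * z.re + Real.sin φ * z.im := by
  rw [← ofReal_neg, mul_re, exp_ofReal_mul_I_re, exp_ofReal_mul_I_im, Real.cos_neg, Real.sin_neg]
  ring

lemma im_exp_neg_mul_I_mul (φ : ℝ) (z : ℂ) :
    (exp (-φ * I) * z).im = Real.cos φ * z.im - Real.sin φ * z.re := by
  rw [← ofReal_neg, mul_im, exp_ofReal_mul_I_re, exp_ofReal_mul_I_im, Real.cos_neg, Real.sin_neg]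
  ring

end Complex

section

-- `𝓜` precedes `mΩ` so that instance resolution picks the ambient σ-algebra `mΩ`.
variable {Ω : Type*} {𝓜 mΩ : MeasurableSpace Ω} {P : Measure Ω}

def MemLpAll {E : Type*} [NormedAddCommGroup E] (f : Ω → E) (P : Measure Ω) : Prop :=
  ∀ p : ℝ≥0, MemLp f p P

namespace MemLpAll

variable {f g : Ω → ℝ}

lemma integrable [IsFiniteMeasure P] (hf : MemLpAll f P) : Integrable f P :=
  memLp_one_iff_integrable.1 (by simpa using hf 1)

lemma add (hf : MemLpAll f P) (hg : MemLpAll g P) : MemLpAll (fun ω => f ω + g ω) P :=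
  fun p => (hf p).add (hg p)

lemma sub (hf : MemLpAll f P) (hg : MemLpAll g P) : MemLpAll (fun ω => f ω - g ω) P :=
  fun p => (hf p).sub (hg p)

lemma mul (hf : MemLpAll f P) (hg : MemLpAll g P) : MemLpAll (fun ω => f ω * g ω) P :=
  fun p =>
    have : ENNReal.HolderTriple (2 * p : ℝ≥0) (2 * p : ℝ≥0) p := ⟨by
      rw [ENNReal.coe_mul, ENNReal.coe_ofNat, ENNReal.mul_inv (by simp) (by simp), ← add_mul,
        ENNReal.inv_two_add_inv_two, one_mul]⟩
    (hg (2 * p)).mul' (hf (2 * p))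

lemma pow [IsFiniteMeasure P] (hf : MemLpAll f P) (n : ℕ) : MemLpAll (fun ω => f ω ^ n) P := by
  induction n with
  | zero => exact fun p => by simpa using memLp_const (1 : ℝ)
  | succ n ih => simpa only [pow_succ] using ih.mul hf

lemma finset_sum {ι : Type*} (s : Finset ι) {f : ι → Ω → ℝ} (hf : ∀ i ∈ s, MemLpAll (f i) P) :
    MemLpAll (fun ω => ∑ i ∈ s, f i ω) P :=
  fun p => memLp_finsetSum s fun i hi => hf i hi p

lemma of_bound [IsFiniteMeasure P] (hf : AEStronglyMeasurable f P) (C : ℝ)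
    (hC : ∀ᵐ ω ∂P, |f ω| ≤ C) : MemLpAll f P :=
  fun _ => MemLp.of_bound hf C hC

lemma of_hasLaw_gaussianReal {μ : ℝ} {v : ℝ≥0} (hf : HasLaw f (gaussianReal μ v) P) :
    MemLpAll f P := fun p => by
  have := memLp_id_gaussianReal (μ := μ) (v := v) p
  rw [← hf.map_eq] at this
  exact this.comp_of_map hf.aemeasurable

end MemLpAll

lemma memLpAll_cos_comp [IsFiniteMeasure P] {φ : Ω → ℝ} (hφ : Measurable φ) :
    MemLpAll (fun ω => Real.cos (φ ω)) P :=
  .of_bound (Real.measurable_cos.comp hφ).aestronglyMeasurable 1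
    (ae_of_all _ fun _ => Real.abs_cos_le_one _)

lemma memLpAll_sin_comp [IsFiniteMeasure P] {φ : Ω → ℝ} (hφ : Measurable φ) :
    MemLpAll (fun ω => Real.sin (φ ω)) P :=
  .of_bound (Real.measurable_sin.comp hφ).aestronglyMeasurable 1
    (ae_of_all _ fun _ => Real.abs_sin_le_one _)

lemma integral_mul_comp_eq_zero_of_indep {β : Type*} [MeasurableSpace β] (h𝓜 : 𝓜 ≤ mΩ)
    {Z : Ω → β} (hZ : Measurable Z) (hind : Indep 𝓜 (MeasurableSpace.comap Z inferInstance) P)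
    {V : Ω → ℝ} (hV : Measurable[𝓜] V) {h : β → ℝ} (hh : Measurable h)
    (h0 : ∫ ω, h (Z ω) ∂P = 0) :
    ∫ ω, V ω * h (Z ω) ∂P = 0 := by
  have hVZ : IndepFun V (fun ω => h (Z ω)) P :=
    indep_of_indep_of_le_left (indep_of_indep_of_le_right hind
      (hh.comp (comap_measurable Z)).comap_le) hV.comap_le
  rw [hVZ.integral_fun_mul_eq_mul_integral (hV.mono h𝓜 le_rfl).aestronglyMeasurable
    (hh.comp hZ).aestronglyMeasurable, h0, mul_zero]

/-- Centred, with vanishing pseudo-covariance `E[Z²] = 0`. -/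
structure IsCenteredCircular (Z : Ω → ℂ) (P : Measure Ω) : Prop where
  memLpAll_re : MemLpAll (fun ω => (Z ω).re) P
  memLpAll_im : MemLpAll (fun ω => (Z ω).im) P
  integral_re : ∫ ω, (Z ω).re ∂P = 0
  integral_im : ∫ ω, (Z ω).im ∂P = 0
  integral_re_mul_im : ∫ ω, (Z ω).re * (Z ω).im ∂P = 0
  integral_re_sq : ∫ ω, (Z ω).re ^ 2 ∂P = ∫ ω, (Z ω).im ^ 2 ∂P

lemma IsCenteredCircular.of_hasLaw_gaussianReal {Z : Ω → ℂ} {v : ℝ≥0}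
    (hre : HasLaw (fun ω => (Z ω).re) (gaussianReal 0 v) P)
    (him : HasLaw (fun ω => (Z ω).im) (gaussianReal 0 v) P)
    (hind : IndepFun (fun ω => (Z ω).re) (fun ω => (Z ω).im) P) : IsCenteredCircular Z P where
  memLpAll_re := .of_hasLaw_gaussianReal hre
  memLpAll_im := .of_hasLaw_gaussianReal him
  integral_re := hre.integral_eq.trans integral_id_gaussianReal
  integral_im := him.integral_eq.trans integral_id_gaussianReal
  integral_re_mul_im := by
    rw [hind.integral_fun_mul_eq_mul_integral hre.aemeasurable.aestronglyMeasurable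
      him.aemeasurable.aestronglyMeasurable, hre.integral_eq, integral_id_gaussianReal, zero_mul]
  integral_re_sq := (hre.integral_comp (f := fun x => x ^ 2) (by fun_prop)).trans
    (him.integral_comp (f := fun x => x ^ 2) (by fun_prop)).symm

section Rotation

open Complex

variable [IsFiniteMeasure P] {Z : Ω → ℂ} {W φ : Ω → ℝ}

lemma memLpAll_re_exp_neg_mul_I_mul (hφ : Measurable φ) (hre : MemLpAll (fun ω => (Z ω).re) P)
    (him : MemLpAll (fun ω => (Z ω).im) P) :
    MemLpAll (fun ω => (exp (-φ ω * I) * Z ω).re) P := by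
  simp_rw [re_exp_neg_mul_I_mul]
  exact ((memLpAll_cos_comp hφ).mul hre).add ((memLpAll_sin_comp hφ).mul him)

lemma memLpAll_im_exp_neg_mul_I_mul (hφ : Measurable φ) (hre : MemLpAll (fun ω => (Z ω).re) P)
    (him : MemLpAll (fun ω => (Z ω).im) P) :
    MemLpAll (fun ω => (exp (-φ ω * I) * Z ω).im) P := by
  simp_rw [im_exp_neg_mul_I_mul]
  exact ((memLpAll_cos_comp hφ).mul him).sub ((memLpAll_sin_comp hφ).mul hre)

lemma integral_mul_re_exp_neg_mul_I_mul_eq_zero (h𝓜 : 𝓜 ≤ mΩ) (hZ : Measurable Z)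
    (hind : Indep 𝓜 (MeasurableSpace.comap Z inferInstance) P) (hZc : IsCenteredCircular Z P)
    (hW : Measurable[𝓜] W) (hWM : MemLpAll W P) (hφ : Measurable[𝓜] φ) :
    ∫ ω, W ω * (exp (-φ ω * I) * Z ω).re ∂P = 0 := by
  have hcos := memLpAll_cos_comp (P := P) (hφ.mono h𝓜 le_rfl)
  have hsin := memLpAll_sin_comp (P := P) (hφ.mono h𝓜 le_rfl)
  calc ∫ ω, W ω * (exp (-φ ω * I) * Z ω).re ∂P
      = ∫ ω, W ω * Real.cos (φ ω) * re (Z ω) + W ω * Real.sin (φ ω) * im (Z ω) ∂P := by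
        congr 1 with ω; rw [re_exp_neg_mul_I_mul]; ring
    _ = 0 := by
      rw [integral_add ((hWM.mul hcos).mul hZc.memLpAll_re).integrable
        ((hWM.mul hsin).mul hZc.memLpAll_im).integrable,
        integral_mul_comp_eq_zero_of_indep h𝓜 hZ hind (V := fun ω => W ω * Real.cos (φ ω))
          (by fun_prop) measurable_re hZc.integral_re,
        integral_mul_comp_eq_zero_of_indep h𝓜 hZ hind (V := fun ω => W ω * Real.sin (φ ω))
          (by fun_prop) measurable_im hZc.integral_im, add_zero]

lemma integral_mul_im_exp_neg_mul_I_mul_eq_zero (h𝓜 : 𝓜 ≤ mΩ) (hZ : Measurable Z)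
    (hind : Indep 𝓜 (MeasurableSpace.comap Z inferInstance) P) (hZc : IsCenteredCircular Z P)
    (hW : Measurable[𝓜] W) (hWM : MemLpAll W P) (hφ : Measurable[𝓜] φ) :
    ∫ ω, W ω * (exp (-φ ω * I) * Z ω).im ∂P = 0 := by
  have hcos := memLpAll_cos_comp (P := P) (hφ.mono h𝓜 le_rfl)
  have hsin := memLpAll_sin_comp (P := P) (hφ.mono h𝓜 le_rfl)
  calc ∫ ω, W ω * (exp (-φ ω * I) * Z ω).im ∂P
      = ∫ ω, W ω * Real.cos (φ ω) * im (Z ω) - W ω * Real.sin (φ ω) * re (Z ω) ∂P := by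
        congr 1 with ω; rw [im_exp_neg_mul_I_mul]; ring
    _ = 0 := by
      rw [integral_sub ((hWM.mul hcos).mul hZc.memLpAll_im).integrable
        ((hWM.mul hsin).mul hZc.memLpAll_re).integrable,
        integral_mul_comp_eq_zero_of_indep h𝓜 hZ hind (V := fun ω => W ω * Real.cos (φ ω))
          (by fun_prop) measurable_im hZc.integral_im,
        integral_mul_comp_eq_zero_of_indep h𝓜 hZ hind (V := fun ω => W ω * Real.sin (φ ω))
          (by fun_prop) measurable_re hZc.integral_re, sub_zero]

lemma integral_mul_re_mul_im_exp_neg_mul_I_mul_eq_zero (h𝓜 : 𝓜 ≤ mΩ) (hZ : Measurable Z)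
    (hind : Indep 𝓜 (MeasurableSpace.comap Z inferInstance) P) (hZc : IsCenteredCircular Z P)
    (hW : Measurable[𝓜] W) (hWM : MemLpAll W P) (hφ : Measurable[𝓜] φ) :
    ∫ ω, W ω * ((exp (-φ ω * I) * Z ω).re * (exp (-φ ω * I) * Z ω).im) ∂P = 0 := by
  have hcos := memLpAll_cos_comp (P := P) (hφ.mono h𝓜 le_rfl)
  have hsin := memLpAll_sin_comp (P := P) (hφ.mono h𝓜 le_rfl)
  have hsq : ∫ ω, (Z ω).im ^ 2 - (Z ω).re ^ 2 ∂P = 0 := by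
    rw [integral_sub (hZc.memLpAll_im.pow 2).integrable (hZc.memLpAll_re.pow 2).integrable,
      hZc.integral_re_sq, sub_self]
  calc ∫ ω, W ω * ((exp (-φ ω * I) * Z ω).re * (exp (-φ ω * I) * Z ω).im) ∂P
      = ∫ ω, W ω * (Real.cos (φ ω) ^ 2 - Real.sin (φ ω) ^ 2) * (re (Z ω) * im (Z ω))
          + W ω * (Real.cos (φ ω) * Real.sin (φ ω)) * (im (Z ω) ^ 2 - re (Z ω) ^ 2) ∂P := by
        congr 1 with ω; rw [re_exp_neg_mul_I_mul, im_exp_neg_mul_I_mul]; ring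
    _ = 0 := by
      rw [integral_add
        ((hWM.mul ((hcos.pow 2).sub (hsin.pow 2))).mul
          (hZc.memLpAll_re.mul hZc.memLpAll_im)).integrable
        ((hWM.mul (hcos.mul hsin)).mul
          ((hZc.memLpAll_im.pow 2).sub (hZc.memLpAll_re.pow 2))).integrable,
        integral_mul_comp_eq_zero_of_indep h𝓜 hZ hind
          (V := fun ω => W ω * (Real.cos (φ ω) ^ 2 - Real.sin (φ ω) ^ 2))
          (h := fun z => z.re * z.im) (by fun_prop) (by fun_prop) hZc.integral_re_mul_im,
        integral_mul_comp_eq_zero_of_indep h𝓜 hZ hind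
          (V := fun ω => W ω * (Real.cos (φ ω) * Real.sin (φ ω)))
          (h := fun z => z.im ^ 2 - z.re ^ 2) (by fun_prop) (by fun_prop) hsq, add_zero]

end Rotation

/-- `∑ f` and `∑ g` are martingales whose product is again a martingale; conditional
expectations given `ℱ k` are expressed by testing against `ℱ k`-measurable weights `W`. -/
structure StronglyOrthogonalIncrements (ℱ : Filtration ℕ mΩ) (P : Measure Ω) (m : ℕ)
    (f g : ℕ → Ω → ℝ) : Prop where
  measurable_f : ∀ k < m, Measurable[ℱ (k + 1)] (f k)
  measurable_g : ∀ k < m, Measurable[ℱ (k + 1)] (g k)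
  memLpAll_f : ∀ k < m, MemLpAll (f k) P
  memLpAll_g : ∀ k < m, MemLpAll (g k) P
  integral_mul_f : ∀ k < m, ∀ W : Ω → ℝ, Measurable[ℱ k] W → MemLpAll W P →
    ∫ ω, W ω * f k ω ∂P = 0
  integral_mul_g : ∀ k < m, ∀ W : Ω → ℝ, Measurable[ℱ k] W → MemLpAll W P →
    ∫ ω, W ω * g k ω ∂P = 0
  integral_mul_f_mul_g : ∀ k < m, ∀ W : Ω → ℝ, Measurable[ℱ k] W → MemLpAll W P →
    ∫ ω, W ω * (f k ω * g k ω) ∂P = 0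

namespace StronglyOrthogonalIncrements

variable {ℱ : Filtration ℕ mΩ} {m : ℕ} {f g : ℕ → Ω → ℝ}

lemma symm (h : StronglyOrthogonalIncrements ℱ P m f g) :
    StronglyOrthogonalIncrements ℱ P m g f where
  measurable_f := h.measurable_g
  measurable_g := h.measurable_f
  memLpAll_f := h.memLpAll_g
  memLpAll_g := h.memLpAll_f
  integral_mul_f := h.integral_mul_g
  integral_mul_g := h.integral_mul_f
  integral_mul_f_mul_g k hk W hW hWM := by
    simpa only [mul_comm (f k _)] using h.integral_mul_f_mul_g k hk W hW hWM

lemma measurable_sum (h : StronglyOrthogonalIncrements ℱ P m f g) {s : Finset ℕ} {k : ℕ}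
    (hs : ∀ j ∈ s, j < k) (hk : k ≤ m) : Measurable[ℱ k] (fun ω => ∑ j ∈ s, f j ω) :=
  Finset.measurable_sum s fun j hj =>
    (h.measurable_f j ((hs j hj).trans_le hk)).mono (ℱ.mono (hs j hj)) le_rfl

lemma memLpAll_sum (h : StronglyOrthogonalIncrements ℱ P m f g) {s : Finset ℕ}
    (hs : ∀ j ∈ s, j < m) : MemLpAll (fun ω => ∑ j ∈ s, f j ω) P :=
  .finset_sum s fun j hj => h.memLpAll_f j (hs j hj)

variable [IsFiniteMeasure P]

lemma integral_mul_sum_Ico (h : StronglyOrthogonalIncrements ℱ P m f g) {n : ℕ} {W : Ω → ℝ}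
    (hW : Measurable[ℱ n] W) (hWM : MemLpAll W P) :
    ∫ ω, W ω * ∑ k ∈ Ico n m, f k ω ∂P = 0 := by
  simp_rw [mul_sum]
  rw [integral_finsetSum _ fun k hk => (hWM.mul (h.memLpAll_f k (mem_Ico.1 hk).2)).integrable]
  exact sum_eq_zero fun k hk =>
    h.integral_mul_f k (mem_Ico.1 hk).2 W (hW.mono (ℱ.mono (mem_Ico.1 hk).1) le_rfl) hWM

lemma integral_mul_add_add_eq_zero (h : StronglyOrthogonalIncrements ℱ P m f g) {k : ℕ}
    (hk : k < m) {U V W : Ω → ℝ} (hU : Measurable[ℱ k] U) (hV : Measurable[ℱ k] V)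
    (hW : Measurable[ℱ k] W) (hUM : MemLpAll U P) (hVM : MemLpAll V P) (hWM : MemLpAll W P) :
    ∫ ω, W ω * (U ω * g k ω + V ω * f k ω + f k ω * g k ω) ∂P = 0 := by
  have hf := h.memLpAll_f k hk
  have hg := h.memLpAll_g k hk
  have hUg := ((hWM.mul hUM).mul hg).integrable
  have hVf := ((hWM.mul hVM).mul hf).integrable
  have hfg := (hWM.mul (hf.mul hg)).integrable
  calc ∫ ω, W ω * (U ω * g k ω + V ω * f k ω + f k ω * g k ω) ∂P
      = ∫ ω, W ω * U ω * g k ω + W ω * V ω * f k ω + W ω * (f k ω * g k ω) ∂P := by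
        congr 1 with ω; ring
    _ = 0 := by
      rw [integral_add (hUg.fun_add hVf) hfg, integral_add hUg hVf,
        h.integral_mul_g k hk (fun ω => W ω * U ω) (hW.mul hU) (hWM.mul hUM),
        h.integral_mul_f k hk (fun ω => W ω * V ω) (hW.mul hV) (hWM.mul hVM),
        h.integral_mul_f_mul_g k hk W hW hWM, add_zero, add_zero]

lemma integral_mul_sum_Ico_mul_sum_Ico (h : StronglyOrthogonalIncrements ℱ P m f g) {n : ℕ}
    (hnm : n ≤ m) {W : Ω → ℝ} (hW : Measurable[ℱ n] W) (hWM : MemLpAll W P) :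
    ∫ ω, W ω * ((∑ k ∈ Ico n m, f k ω) * ∑ k ∈ Ico n m, g k ω) ∂P = 0 := by
  simp_rw [sum_Ico_mul_sum_Ico _ _ hnm, mul_sum]
  have hlt : ∀ k ∈ Ico n m, ∀ j ∈ Ico n k, j < k := fun _ _ j hj => (mem_Ico.1 hj).2
  have hlt_m : ∀ k ∈ Ico n m, ∀ j ∈ Ico n k, j < m := fun k hk j hj =>
    (hlt k hk j hj).trans (mem_Ico.1 hk).2
  refine (integral_finsetSum _ fun k hk => ?_).trans (sum_eq_zero fun k hk => ?_)
  · have hk' := (mem_Ico.1 hk).2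
    exact (hWM.mul ((((h.memLpAll_sum (hlt_m k hk)).mul (h.memLpAll_g k hk')).add
      ((h.symm.memLpAll_sum (hlt_m k hk)).mul (h.memLpAll_f k hk'))).add
        ((h.memLpAll_f k hk').mul (h.memLpAll_g k hk')))).integrable
  · obtain ⟨hnk, hk'⟩ := mem_Ico.1 hk
    exact h.integral_mul_add_add_eq_zero hk' (h.measurable_sum (hlt k hk) hk'.le)
      (h.symm.measurable_sum (hlt k hk) hk'.le) (hW.mono (ℱ.mono hnk) le_rfl)
      (h.memLpAll_sum (hlt_m k hk)) (h.symm.memLpAll_sum (hlt_m k hk)) hWM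

lemma integral_increment_orthogonality (h : StronglyOrthogonalIncrements ℱ P m f g)
    {A B : ℕ → Ω → ℝ} (hA : ∀ n ω, A n ω = ∑ k ∈ range n, f k ω)
    (hB : ∀ n ω, B n ω = ∑ k ∈ range n, g k ω) {n : ℕ} (hn : n ≤ m) :
    (∫ ω, (A n ω) ^ 2 * B n ω * (B m ω - B n ω) ∂P = 0) ∧
      (∫ ω, A n ω * (B n ω) ^ 2 * (A m ω - A n ω) ∂P = 0) ∧
      (∫ ω, A n ω * B n ω * (A m ω - A n ω) * (B m ω - B n ω) ∂P = 0) := by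
  obtain rfl : A = fun n ω => ∑ k ∈ range n, f k ω := funext fun n => funext (hA n)
  obtain rfl : B = fun n ω => ∑ k ∈ range n, g k ω := funext fun n => funext (hB n)
  simp only [← sum_Ico_eq_sub _ hn]
  have hlt : ∀ j ∈ range n, j < n := fun j hj => mem_range.1 hj
  have hlt_m : ∀ j ∈ range n, j < m := fun j hj => (hlt j hj).trans_le hn
  have hAm := h.measurable_sum hlt hn
  have hBm := h.symm.measurable_sum hlt hn
  have hAM := h.memLpAll_sum hlt_m
  have hBM := h.symm.memLpAll_sum hlt_m
  refine ⟨h.symm.integral_mul_sum_Ico ((hAm.pow_const 2).mul hBm) ((hAM.pow 2).mul hBM),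
    h.integral_mul_sum_Ico (hAm.mul (hBm.pow_const 2)) (hAM.mul (hBM.pow 2)), ?_⟩
  simpa only [Pi.mul_apply, mul_assoc] using
    h.integral_mul_sum_Ico_mul_sum_Ico hn (hAm.mul hBm) (hAM.mul hBM)

lemma of_rotation {G : ℕ → Ω → ℂ} {Φ R S : ℕ → Ω → ℝ}
    (hG : ∀ k < m, Measurable[ℱ (k + 1)] (G k))
    (hind : ∀ k < m, Indep (ℱ k) (MeasurableSpace.comap (G k) inferInstance) P)
    (hGc : ∀ k < m, IsCenteredCircular (G k) P) (hΦ : ∀ k < m, Measurable[ℱ k] (Φ k))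
    (hR : ∀ k < m, Measurable[ℱ k] (R k)) (hS : ∀ k < m, Measurable[ℱ k] (S k))
    (hRM : ∀ k < m, MemLpAll (R k) P) (hSM : ∀ k < m, MemLpAll (S k) P) :
    StronglyOrthogonalIncrements ℱ P m
      (fun k ω => (Complex.exp (-Φ k ω * Complex.I) * G k ω).im * R k ω)
      (fun k ω => (Complex.exp (-Φ k ω * Complex.I) * G k ω).re * S k ω) := by
  have hG' : ∀ k < m, Measurable (G k) := fun k hk => (hG k hk).mono (ℱ.le _) le_rfl
  have hΦ' : ∀ k < m, Measurable (Φ k) := fun k hk => (hΦ k hk).mono (ℱ.le _) le_rfl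
  have hpast : ∀ {X : Ω → ℝ} {k : ℕ}, Measurable[ℱ k] X → Measurable[ℱ (k + 1)] X :=
    fun {_ k} hX => hX.mono (ℱ.mono k.le_succ) le_rfl
  refine
    { measurable_f := fun k hk => ?_
      measurable_g := fun k hk => ?_
      memLpAll_f := fun k hk => ?_
      memLpAll_g := fun k hk => ?_
      integral_mul_f := fun k hk W hW hWM => ?_
      integral_mul_g := fun k hk W hW hWM => ?_
      integral_mul_f_mul_g := fun k hk W hW hWM => ?_ }
  · have := hG k hk; have := hpast (hΦ k hk); have := hpast (hR k hk); fun_prop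
  · have := hG k hk; have := hpast (hΦ k hk); have := hpast (hS k hk); fun_prop
  · exact (memLpAll_im_exp_neg_mul_I_mul (hΦ' k hk) (hGc k hk).memLpAll_re
      (hGc k hk).memLpAll_im).mul (hRM k hk)
  · exact (memLpAll_re_exp_neg_mul_I_mul (hΦ' k hk) (hGc k hk).memLpAll_re
      (hGc k hk).memLpAll_im).mul (hSM k hk)
  · simpa only [Pi.mul_apply, mul_assoc, mul_comm (R k _)] using
      integral_mul_im_exp_neg_mul_I_mul_eq_zero (ℱ.le k) (hG' k hk) (hind k hk) (hGc k hk)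
        (hW.mul (hR k hk)) (hWM.mul (hRM k hk)) (hΦ k hk)
  · simpa only [Pi.mul_apply, mul_assoc, mul_comm (S k _)] using
      integral_mul_re_exp_neg_mul_I_mul_eq_zero (ℱ.le k) (hG' k hk) (hind k hk) (hGc k hk)
        (hW.mul (hS k hk)) (hWM.mul (hSM k hk)) (hΦ k hk)
  · rw [← integral_mul_re_mul_im_exp_neg_mul_I_mul_eq_zero (ℱ.le k) (hG' k hk) (hind k hk)
      (hGc k hk) (W := fun ω => W ω * R k ω * S k ω) ((hW.mul (hR k hk)).mul (hS k hk))
      ((hWM.mul (hRM k hk)).mul (hSM k hk)) (hΦ k hk)]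
    congr 1 with ω
    ring

end StronglyOrthogonalIncrements

lemma comap_le_comap_re_sup_comap_im (Z : Ω → ℂ) :
    MeasurableSpace.comap Z inferInstance ≤
      MeasurableSpace.comap (fun ω => (Z ω).re) inferInstance ⊔
        MeasurableSpace.comap (fun ω => (Z ω).im) inferInstance :=
  (@measurable_of_re_im Ω ℂ _ (_ ⊔ _) Z (Measurable.of_comap_le le_sup_left)
    (Measurable.of_comap_le le_sup_right)).comap_le

def pastFiltration {β : Type*} [MeasurableSpace β] (G : ℕ → Ω → β)
    (hG : ∀ k, Measurable (G k)) : Filtration ℕ mΩ where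
  seq k := ⨆ j ∈ range k, MeasurableSpace.comap (G j) inferInstance
  mono' _ _ hkl := biSup_mono fun _ hj => mem_range.2 ((mem_range.1 hj).trans_le hkl)
  le' _ := iSup₂_le fun j _ => (hG j).comap_le

lemma measurable_pastFiltration_succ {β : Type*} [MeasurableSpace β] {G : ℕ → Ω → β}
    (hG : ∀ k, Measurable (G k)) (k : ℕ) : Measurable[pastFiltration G hG (k + 1)] (G k) :=
  Measurable.of_comap_le (le_iSup₂_of_le k (mem_range.2 k.lt_succ_self) le_rfl)

lemma indep_pastFiltration_comap {m : ℕ} {G : ℕ → Ω → ℂ} (hG : ∀ k, Measurable (G k))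
    (hindep : iIndepFun (fun p : Fin m × Bool => fun ω =>
      if p.2 then (G p.1 ω).re else (G p.1 ω).im) P) {k : ℕ} (hk : k < m) :
    Indep (pastFiltration G hG k) (MeasurableSpace.comap (G k) inferInstance) P := by
  set X := fun p : Fin m × Bool => fun ω => if p.2 then (G p.1 ω).re else (G p.1 ω).im
  have hX : ∀ p, Measurable (X p) := by
    rintro ⟨j, _ | _⟩
    · exact Complex.measurable_im.comp (hG j)
    · exact Complex.measurable_re.comp (hG j)
  have hle : ∀ j (hj : j < m), MeasurableSpace.comap (G j) inferInstance ≤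
      ⨆ p ∈ {p : Fin m × Bool | (p.1 : ℕ) = j}, MeasurableSpace.comap (X p) inferInstance :=
    fun j hj => (comap_le_comap_re_sup_comap_im (G j)).trans <|
      sup_le (le_iSup₂_of_le (⟨j, hj⟩, true) rfl le_rfl)
        (le_iSup₂_of_le (⟨j, hj⟩, false) rfl le_rfl)
  have hdisj : Disjoint {p : Fin m × Bool | (p.1 : ℕ) < k} {p | (p.1 : ℕ) = k} :=
    Set.disjoint_left.2 fun _ hlt heq => (ne_of_lt hlt) heq
  refine indep_of_indep_of_le_left (indep_of_indep_of_le_right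
    (indep_iSup_of_disjoint (fun p => (hX p).comap_le) hindep.iIndep hdisj) (hle k hk)) ?_
  refine iSup₂_le fun j hj => (hle j ((mem_range.1 hj).trans hk)).trans ?_
  exact biSup_mono fun p (hp : (p.1 : ℕ) = j) => show (p.1 : ℕ) < k from hp ▸ mem_range.1 hj

end

theorem discrete_ito_increment_orthogonality_general
    {Ω : Type*} [MeasurableSpace Ω] (P : Measure Ω) [IsProbabilityMeasure P]
    (m : ℕ) (v : ℝ≥0)
    (G : ℕ → Ω → ℂ) (hGmeas : ∀ k, Measurable (G k))
    (hindep : iIndepFun (m := fun _ : Fin m × Bool => (inferInstance : MeasurableSpace ℝ))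
      (fun p : Fin m × Bool => fun ω => if p.2 then (G p.1 ω).re else (G p.1 ω).im) P)
    (hlaw : ∀ p : Fin m × Bool,
      P.map (fun ω => if p.2 then (G p.1 ω).re else (G p.1 ω).im) = gaussianReal 0 v)
    (𝓕 : ℕ → MeasurableSpace Ω)
    (h𝓕 : ∀ k, 𝓕 k = ⨆ j ∈ Finset.range k,
      MeasurableSpace.comap (G j) (inferInstance : MeasurableSpace ℂ))
    (Φ R S : ℕ → Ω → ℝ)
    (hΦmeas : ∀ k < m, Measurable[𝓕 k] (Φ k))
    (hRmeas : ∀ k < m, Measurable[𝓕 k] (R k))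
    (hSmeas : ∀ k < m, Measurable[𝓕 k] (S k))
    (hRbdd : ∀ k < m, ∃ C : ℝ, ∀ᵐ ω ∂P, |R k ω| ≤ C)
    (hSbdd : ∀ k < m, ∃ C : ℝ, ∀ᵐ ω ∂P, |S k ω| ≤ C)
    (A B : ℕ → Ω → ℝ)
    (hA : ∀ n ω, A n ω =
      ∑ k ∈ Finset.range n, (Complex.exp (-(Φ k ω : ℂ) * Complex.I) * G k ω).im * R k ω)
    (hB : ∀ n ω, B n ω =
      ∑ k ∈ Finset.range n, (Complex.exp (-(Φ k ω : ℂ) * Complex.I) * G k ω).re * S k ω) :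
    ∀ n ≤ m,
      (∫ ω, (A n ω) ^ 2 * B n ω * (B m ω - B n ω) ∂P = 0) ∧
      (∫ ω, A n ω * (B n ω) ^ 2 * (A m ω - A n ω) ∂P = 0) ∧
      (∫ ω, A n ω * B n ω * (A m ω - A n ω) * (B m ω - B n ω) ∂P = 0) := by
  obtain rfl : 𝓕 = pastFiltration G hGmeas := funext h𝓕
  have hcirc : ∀ k < m, IsCenteredCircular (G k) P := fun k hk =>
    .of_hasLaw_gaussianReal ⟨by fun_prop, hlaw (⟨k, hk⟩, true)⟩
      ⟨by fun_prop, hlaw (⟨k, hk⟩, false)⟩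
      (hindep.indepFun (i := (⟨k, hk⟩, true)) (j := (⟨k, hk⟩, false)) (by simp))
  have hbdd : ∀ {X : ℕ → Ω → ℝ}, (∀ k < m, Measurable[pastFiltration G hGmeas k] (X k)) →
      (∀ k < m, ∃ C : ℝ, ∀ᵐ ω ∂P, |X k ω| ≤ C) → ∀ k < m, MemLpAll (X k) P :=
    fun hX hC k hk =>
      let ⟨C, hC⟩ := hC k hk
      .of_bound ((hX k hk).mono (Filtration.le _ k) le_rfl).aestronglyMeasurable C hC
  exact fun n hn => (StronglyOrthogonalIncrements.of_rotation
    (fun k _ => measurable_pastFiltration_succ hGmeas k)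
    (fun k hk => indep_pastFiltration_comap hGmeas hindep hk) hcirc hΦmeas hRmeas hSmeas
    (hbdd hRmeas hRbdd) (hbdd hSmeas hSbdd)).integral_increment_orthogonality hA hB hn

/-- Discrete analogue of Lemma 1, part 1 of the paper: in the discrete Itô setting, for all
`n ≤ m` the partial sums satisfy the three increment-orthogonality identities
`E[A_n² B_n (B_m - B_n)] = 0`, `E[A_n B_n² (A_m - A_n)] = 0` and
`E[A_n B_n (A_m - A_n)(B_m - B_n)] = 0`. -/
theorem discrete_ito_increment_orthogonality
    {Ω : Type*} [MeasurableSpace Ω] (P : Measure Ω) [IsProbabilityMeasure P]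
    (m : ℕ) (v : ℝ≥0) (hv : 0 < v)
    (G : ℕ → Ω → ℂ) (hGmeas : ∀ k, Measurable (G k))
    (hindep : iIndepFun (m := fun _ : Fin m × Bool => (inferInstance : MeasurableSpace ℝ))
      (fun p : Fin m × Bool => fun ω => if p.2 then (G p.1 ω).re else (G p.1 ω).im) P)
    (hlaw : ∀ p : Fin m × Bool,
      P.map (fun ω => if p.2 then (G p.1 ω).re else (G p.1 ω).im) = gaussianReal 0 v)
    (𝓕 : ℕ → MeasurableSpace Ω)
    (h𝓕 : ∀ k, 𝓕 k = ⨆ j ∈ Finset.range k,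
      MeasurableSpace.comap (G j) (inferInstance : MeasurableSpace ℂ))
    (Φ R S : ℕ → Ω → ℝ)
    (hΦmeas : ∀ k < m, Measurable[𝓕 k] (Φ k))
    (hRmeas : ∀ k < m, Measurable[𝓕 k] (R k))
    (hSmeas : ∀ k < m, Measurable[𝓕 k] (S k))
    (hΦbdd : ∀ k < m, ∃ C : ℝ, ∀ᵐ ω ∂P, |Φ k ω| ≤ C)
    (hRbdd : ∀ k < m, ∃ C : ℝ, ∀ᵐ ω ∂P, |R k ω| ≤ C)
    (hSbdd : ∀ k < m, ∃ C : ℝ, ∀ᵐ ω ∂P, |S k ω| ≤ C)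
    (A B : ℕ → Ω → ℝ)
    (hA : ∀ n ω, A n ω =
      ∑ k ∈ Finset.range n, (Complex.exp (-(Φ k ω : ℂ) * Complex.I) * G k ω).im * R k ω)
    (hB : ∀ n ω, B n ω =
      ∑ k ∈ Finset.range n, (Complex.exp (-(Φ k ω : ℂ) * Complex.I) * G k ω).re * S k ω) :
    ∀ n ≤ m,
      (∫ ω, (A n ω) ^ 2 * B n ω * (B m ω - B n ω) ∂P = 0) ∧
      (∫ ω, A n ω * (B n ω) ^ 2 * (A m ω - A n ω) ∂P = 0) ∧
      (∫ ω, A n ω * B n ω * (A m ω - A n ω) * (B m ω - B n ω) ∂P = 0) :=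
  discrete_ito_increment_orthogonality_general P m v G hGmeas hindep hlaw 𝓕 h𝓕 Φ R S hΦmeas hRmeas
    hSmeas hRbdd hSbdd A B hA hB
end

section
/- Let (Ω, 𝓕, P) be a probability space, with E[·] denoting expectation and Var[N] = E[N²] − (E[N])². Fix real constants L > 0, ε > 0, α₀ and β₀. Let X, Y : [0, L] × Ω → ℝ be jointly measurable processes such that X, Y and the product X·Y each satisfy ∫∫ (·)² dλ dP < ∞ (λ the Lebesgue measure on [0, L]). Assume the following moment identities: (i) E[X(z)] = 0 and E[Y(z)] = (1/2)ε²z for all z ∈ [0, L]; (ii) for all 0 ≤ s ≤ t ≤ L: E[X(s)X(t)] = (1/6)ε²sβ₀ + (1/24)ε⁴s²; (iii) for all 0 ≤ s ≤ t ≤ L: E[Y(s)Y(t)] = (1/2)ε²sβ₀ + (3/8)ε⁴s² + (1/4)ε⁴s(t−s); (iv) E[X(s)Y(t)] = 0 for all s, t ∈ [0, L]; (v) E[X(s)·X(t)Y(t)] = (1/2)ε²t·((1/6)ε²·min(s,t)·β₀ + (1/24)ε⁴·min(s,t)²) for all s, t ∈ [0, L]; (vi) E[Y(s)·X(t)Y(t)]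 = 0 for all s, t ∈ [0, L]; (vii) for all 0 ≤ s ≤ t ≤ L: E[X(s)Y(s)·X(t)Y(t)] = (1/12)ε⁴s²β₀² + (1/18)ε⁶s³β₀ + (1/144)ε⁸s⁴ + (1/4)ε⁴st·((1/6)ε²sβ₀ + (1/24)ε⁴s²). Define N(ω) = 8α₀∫₀^L Y(z,ω) dz + 8β₀∫₀^L X(z,ω) dz + 8∫₀^L X(z,ω)Y(z,ω) dz. Then Var[N] = (32/3)ε²L³α₀²β₀ + (32/9)ε²L³β₀³ + (16/3)ε⁴L⁴α₀² + (32/9)ε⁴L⁴β₀² + (46/45)ε⁶L⁵β₀ + (23/270)ε⁸L⁶ − 4ε⁴L⁴α₀². -/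
/-!
For square-integrable processes `F`, `G` on `[0, L] × Ω`, the product `F(s, ω) G(t, ω)` is
integrable on `[0, L]² × Ω` (Hölder), so Fubini gives `E[(∫ F)(∫ G)] = ∫∫ E[F(s) G(t)] ds dt`.
Expanding `N²` into the six products of `∫ X`, `∫ Y` and `∫ X Y` therefore turns `Var N` into
double integrals over `[0, L]²` of the moment kernels (i)–(vii). Each kernel is a polynomial on
either side of the diagonal, so splitting the inner integral at `t = s` leaves integrals of
polynomials.
-/

open MeasureTheory Set Function

section PathIntegral

variable {T Ω : Type*} [MeasurableSpace T] [MeasurableSpace Ω] {μ : Measure T} {P : Measure Ω}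
  {F G : T → Ω → ℝ}

theorem integrable_prod_prod_mul [IsFiniteMeasure μ] [SFinite P]
    (hF : MemLp (uncurry F) 2 (μ.prod P)) (hG : MemLp (uncurry G) 2 (μ.prod P)) :
    Integrable (fun p : (T × T) × Ω => F p.1.1 p.2 * G p.1.2 p.2) ((μ.prod μ).prod P) := by
  have swap_times : MeasurePreserving
      (MeasurableEquiv.prodAssoc.symm ∘ Prod.map id Prod.swap ∘ MeasurableEquiv.prodAssoc)
      ((μ.prod μ).prod P) ((μ.prod P).prod μ) :=
    (measurePreserving_prodAssoc μ P μ).symm.comp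
      (((MeasurePreserving.id μ).prod Measure.measurePreserving_swap).comp
        (measurePreserving_prodAssoc μ μ P))
  have hF' := (hF.comp_fst μ).comp_measurePreserving swap_times
  have hG' := (hG.comp_snd μ).comp_measurePreserving (measurePreserving_prodAssoc μ μ P)
  exact hF'.integrable_mul hG'

theorem integrable_integral_mul_integral [IsFiniteMeasure μ] [SFinite P]
    (hF : MemLp (uncurry F) 2 (μ.prod P)) (hG : MemLp (uncurry G) 2 (μ.prod P)) :
    Integrable (fun ω => (∫ s, F s ω ∂μ) * ∫ t, G t ω ∂μ) P := by
  simp_rw [← integral_prod_mul]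
  exact (integrable_prod_prod_mul hF hG).swap.integral_prod_left

theorem integral_integral_mul_integral [IsFiniteMeasure μ] [SFinite P]
    (hF : MemLp (uncurry F) 2 (μ.prod P)) (hG : MemLp (uncurry G) 2 (μ.prod P)) :
    ∫ ω, (∫ s, F s ω ∂μ) * (∫ t, G t ω ∂μ) ∂P = ∫ s, ∫ t, ∫ ω, F s ω * G t ω ∂P ∂μ ∂μ := by
  have hFG := integrable_prod_prod_mul hF hG
  simp_rw [← integral_prod_mul]
  rw [← integral_integral_swap hFG, integral_prod _ hFG.integral_prod_left]

theorem memLp_two_integral [IsFiniteMeasure μ] [SFinite P] (hF : MemLp (uncurry F) 2 (μ.prod P)) :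
    MemLp (fun ω => ∫ s, F s ω ∂μ) 2 P := by
  have hmeas : AEStronglyMeasurable (fun ω => ∫ s, F s ω ∂μ) P :=
    hF.1.prod_swap.integral_prod_right'
  simpa only [memLp_two_iff_integrable_sq hmeas, sq] using integrable_integral_mul_integral hF hF

end PathIntegral

section LinearCombination

variable {Ω : Type*} [MeasurableSpace Ω] {P : Measure Ω} {U V W : Ω → ℝ}

theorem integral_linear_combination (hU : Integrable U P) (hV : Integrable V P)
    (hW : Integrable W P) (a b c : ℝ) :
    ∫ ω, (a * U ω + b * V ω + c * W ω) ∂P =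
      a * ∫ ω, U ω ∂P + b * ∫ ω, V ω ∂P + c * ∫ ω, W ω ∂P := by
  simp (disch := fun_prop) only [integral_add, integral_const_mul]

theorem integral_linear_combination_sq (hU : MemLp U 2 P) (hV : MemLp V 2 P) (hW : MemLp W 2 P)
    (a b c : ℝ) :
    ∫ ω, (a * U ω + b * V ω + c * W ω) ^ 2 ∂P =
      a ^ 2 * ∫ ω, U ω * U ω ∂P + b ^ 2 * ∫ ω, V ω * V ω ∂P + c ^ 2 * ∫ ω, W ω * W ω ∂P
        + 2 * a * b * ∫ ω, U ω * V ω ∂P + 2 * a * c * ∫ ω, U ω * W ω ∂P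
        + 2 * b * c * ∫ ω, V ω * W ω ∂P := by
  have hUU : Integrable (fun ω => U ω * U ω) P := hU.integrable_mul hU
  have hVV : Integrable (fun ω => V ω * V ω) P := hV.integrable_mul hV
  have hWW : Integrable (fun ω => W ω * W ω) P := hW.integrable_mul hW
  have hUV : Integrable (fun ω => U ω * V ω) P := hU.integrable_mul hV
  have hUW : Integrable (fun ω => U ω * W ω) P := hU.integrable_mul hW
  have hVW : Integrable (fun ω => V ω * W ω) P := hV.integrable_mul hW
  calc _ = ∫ ω, (a ^ 2 * (U ω * U ω) + b ^ 2 * (V ω * V ω) + c ^ 2 * (W ω * W ω)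
        + 2 * a * b * (U ω * V ω) + 2 * a * c * (U ω * W ω) + 2 * b * c * (V ω * W ω)) ∂P := by
        congr 1; ext ω; ring
    _ = _ := by simp (disch := fun_prop) only [integral_add, integral_const_mul]

end LinearCombination

section SquareIntegral

variable {L : ℝ}

theorem setIntegral_Icc_eq_intervalIntegral_add {K lo hi : ℝ → ℝ} {s : ℝ} (hs : s ∈ Icc 0 L)
    (hlo : EqOn K lo (Icc 0 s)) (hhi : EqOn K hi (Icc s L))
    (hlo_cont : Continuous lo) (hhi_cont : Continuous hi) :
    ∫ t in Icc 0 L, K t = (∫ t in 0..s, lo t) + ∫ t in s..L, hi t := by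
  have hlo' : EqOn K lo (uIcc 0 s) := by rwa [uIcc_of_le hs.1]
  have hhi' : EqOn K hi (uIcc s L) := by rwa [uIcc_of_le hs.2]
  rw [integral_Icc_eq_integral_Ioc, ← intervalIntegral.integral_of_le (hs.1.trans hs.2),
    ← intervalIntegral.integral_add_adjacent_intervals
      (hlo_cont.integrableOn_uIcc.congr_fun hlo'.symm measurableSet_uIcc).intervalIntegrable
      (hhi_cont.integrableOn_uIcc.congr_fun hhi'.symm measurableSet_uIcc).intervalIntegrable,
    intervalIntegral.integral_congr hlo', intervalIntegral.integral_congr hhi']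

theorem setIntegral_Icc_setIntegral_Icc_eq (hL : 0 ≤ L) {K lo hi : ℝ → ℝ → ℝ}
    (hlo : ∀ s t, 0 ≤ t → t ≤ s → s ≤ L → K s t = lo s t)
    (hhi : ∀ s t, 0 ≤ s → s ≤ t → t ≤ L → K s t = hi s t)
    (hlo_cont : ∀ s, Continuous (lo s)) (hhi_cont : ∀ s, Continuous (hi s)) :
    ∫ s in Icc 0 L, ∫ t in Icc 0 L, K s t =
      ∫ s in 0..L, ((∫ t in 0..s, lo s t) + ∫ t in s..L, hi s t) := by
  rw [integral_Icc_eq_integral_Ioc, ← intervalIntegral.integral_of_le hL]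
  refine intervalIntegral.integral_congr fun s hs => ?_
  rw [uIcc_of_le hL] at hs
  exact setIntegral_Icc_eq_intervalIntegral_add hs (fun t ht => hlo s t ht.1 ht.2 hs.2)
    (fun t ht => hhi s t hs.1 ht.1 ht.2) (hlo_cont s) (hhi_cont s)

theorem setIntegral_Icc_setIntegral_Icc_eq_of_symm (hL : 0 ≤ L) {K k : ℝ → ℝ → ℝ}
    (hsymm : ∀ s t, K s t = K t s) (hk : ∀ s t, 0 ≤ s → s ≤ t → t ≤ L → K s t = k s t)
    (hk_cont : Continuous (uncurry k)) :
    ∫ s in Icc 0 L, ∫ t in Icc 0 L, K s t =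
      ∫ s in 0..L, ((∫ t in 0..s, k t s) + ∫ t in s..L, k s t) :=
  setIntegral_Icc_setIntegral_Icc_eq hL
    (fun s t h0 hts hs => (hsymm s t).trans (hk t s h0 hts hs)) hk
    (fun _ => hk_cont.comp (continuous_id.prodMk continuous_const))
    (fun _ => hk_cont.comp (continuous_const.prodMk continuous_id))

end SquareIntegral

section MomentKernels

variable {L ε β₀ : ℝ} {K : ℝ → ℝ → ℝ}

theorem doubleIntegral_momentXX (hL : 0 ≤ L) (hsymm : ∀ s t, K s t = K t s)
    (hK : ∀ s t, 0 ≤ s → s ≤ t → t ≤ L →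
      K s t = (1 / 6) * ε ^ 2 * s * β₀ + (1 / 24) * ε ^ 4 * s ^ 2) :
    ∫ s in Icc 0 L, ∫ t in Icc 0 L, K s t =
      (1 / 18) * ε ^ 2 * β₀ * L ^ 3 + (1 / 144) * ε ^ 4 * L ^ 4 := by
  rw [setIntegral_Icc_setIntegral_Icc_eq_of_symm hL hsymm hK (by fun_prop)]
  -- `ring_nf` splits each integrand into monomials `c * t ^ k`, which the `simp` set integrates
  -- term by term: the first round does the inner integrals, the second the outer one.
  iterate 2
    ring_nf
    simp (disch := (apply Continuous.intervalIntegrable; fun_prop)) only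
      [intervalIntegral.integral_add, intervalIntegral.integral_const_mul,
        intervalIntegral.integral_mul_const, intervalIntegral.integral_const_mul (f := fun x => x),
        intervalIntegral.integral_const, smul_eq_mul, integral_pow, integral_id]
  ring

theorem doubleIntegral_momentYY (hL : 0 ≤ L) (hsymm : ∀ s t, K s t = K t s)
    (hK : ∀ s t, 0 ≤ s → s ≤ t → t ≤ L →
      K s t = (1 / 2) * ε ^ 2 * s * β₀ + (3 / 8) * ε ^ 4 * s ^ 2 + (1 / 4) * ε ^ 4 * s * (t - s)) :
    ∫ s in Icc 0 L, ∫ t in Icc 0 L, K s t =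
      (1 / 6) * ε ^ 2 * β₀ * L ^ 3 + (1 / 12) * ε ^ 4 * L ^ 4 := by
  rw [setIntegral_Icc_setIntegral_Icc_eq_of_symm hL hsymm hK (by fun_prop)]
  iterate 2
    ring_nf
    simp (disch := (apply Continuous.intervalIntegrable; fun_prop)) only
      [intervalIntegral.integral_add, intervalIntegral.integral_const_mul,
        intervalIntegral.integral_mul_const, intervalIntegral.integral_const_mul (f := fun x => x),
        intervalIntegral.integral_const, smul_eq_mul, integral_pow, integral_id]
  ring

theorem doubleIntegral_momentXYXY (hL : 0 ≤ L) (hsymm : ∀ s t, K s t = K t s)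
    (hK : ∀ s t, 0 ≤ s → s ≤ t → t ≤ L →
      K s t = (1 / 12) * ε ^ 4 * s ^ 2 * β₀ ^ 2 + (1 / 18) * ε ^ 6 * s ^ 3 * β₀
          + (1 / 144) * ε ^ 8 * s ^ 4
          + (1 / 4) * ε ^ 4 * s * t * ((1 / 6) * ε ^ 2 * s * β₀ + (1 / 24) * ε ^ 4 * s ^ 2)) :
    ∫ s in Icc 0 L, ∫ t in Icc 0 L, K s t =
      (1 / 72) * ε ^ 4 * β₀ ^ 2 * L ^ 4 + (1 / 90) * ε ^ 6 * β₀ * L ^ 5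
        + (23 / 17280) * ε ^ 8 * L ^ 6 := by
  rw [setIntegral_Icc_setIntegral_Icc_eq_of_symm hL hsymm hK (by fun_prop)]
  iterate 2
    ring_nf
    simp (disch := (apply Continuous.intervalIntegrable; fun_prop)) only
      [intervalIntegral.integral_add, intervalIntegral.integral_const_mul,
        intervalIntegral.integral_mul_const, intervalIntegral.integral_const_mul (f := fun x => x),
        intervalIntegral.integral_const, smul_eq_mul, integral_pow, integral_id]
  ring

theorem doubleIntegral_momentXXY (hL : 0 ≤ L)
    (hK : ∀ s ∈ Icc 0 L, ∀ t ∈ Icc 0 L,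
      K s t = (1 / 2) * ε ^ 2 * t *
        ((1 / 6) * ε ^ 2 * min s t * β₀ + (1 / 24) * ε ^ 4 * (min s t) ^ 2)) :
    ∫ s in Icc 0 L, ∫ t in Icc 0 L, K s t =
      (5 / 288) * ε ^ 4 * β₀ * L ^ 4 + (7 / 2880) * ε ^ 6 * L ^ 5 := by
  rw [setIntegral_Icc_setIntegral_Icc_eq hL
    (lo := fun _ t => (1 / 2) * ε ^ 2 * t * ((1 / 6) * ε ^ 2 * t * β₀ + (1 / 24) * ε ^ 4 * t ^ 2))
    (hi := fun s t => (1 / 2) * ε ^ 2 * t * ((1 / 6) * ε ^ 2 * s * β₀ + (1 / 24) * ε ^ 4 * s ^ 2))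
    (fun s t h0 hts hs => by rw [hK s ⟨h0.trans hts, hs⟩ t ⟨h0, hts.trans hs⟩, min_eq_right hts])
    (fun s t h0 hst ht => by rw [hK s ⟨h0, hst.trans ht⟩ t ⟨h0.trans hst, ht⟩, min_eq_left hst])
    (fun _ => by fun_prop) (fun _ => by fun_prop)]
  iterate 2
    ring_nf
    simp (disch := (apply Continuous.intervalIntegrable; fun_prop)) only
      [intervalIntegral.integral_add, intervalIntegral.integral_const_mul,
        intervalIntegral.integral_mul_const, intervalIntegral.integral_const_mul (f := fun x => x),
        integral_pow, integral_id]
  ring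

end MomentKernels

theorem spectral_amplitude_noise_variance_general
    {Ω : Type*} [MeasurableSpace Ω] (P : Measure Ω) [IsProbabilityMeasure P]
    (L ε α₀ β₀ : ℝ) (hL : 0 < L)
    (X Y : ℝ → Ω → ℝ)
    (hXmeas : Measurable (Function.uncurry X))
    (hYmeas : Measurable (Function.uncurry Y))
    (hXsq : Integrable (fun p : ℝ × Ω => (X p.1 p.2) ^ 2)
      ((volume.restrict (Set.Icc 0 L)).prod P))
    (hYsq : Integrable (fun p : ℝ × Ω => (Y p.1 p.2) ^ 2)
      ((volume.restrict (Set.Icc 0 L)).prod P))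
    (hXYsq : Integrable (fun p : ℝ × Ω => (X p.1 p.2 * Y p.1 p.2) ^ 2)
      ((volume.restrict (Set.Icc 0 L)).prod P))
    -- (i) means
    (hXmean : ∀ z ∈ Set.Icc (0 : ℝ) L, ∫ ω, X z ω ∂P = 0)
    (hYmean : ∀ z ∈ Set.Icc (0 : ℝ) L, ∫ ω, Y z ω ∂P = (1 / 2) * ε ^ 2 * z)
    -- (ii) covariance of X
    (hXX : ∀ s t : ℝ, 0 ≤ s → s ≤ t → t ≤ L →
      ∫ ω, X s ω * X t ω ∂P = (1 / 6) * ε ^ 2 * s * β₀ + (1 / 24) * ε ^ 4 * s ^ 2)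
    -- (iii) covariance of Y
    (hYY : ∀ s t : ℝ, 0 ≤ s → s ≤ t → t ≤ L →
      ∫ ω, Y s ω * Y t ω ∂P =
        (1 / 2) * ε ^ 2 * s * β₀ + (3 / 8) * ε ^ 4 * s ^ 2 + (1 / 4) * ε ^ 4 * s * (t - s))
    -- (iv) X and Y uncorrelated
    (hXY : ∀ s ∈ Set.Icc (0 : ℝ) L, ∀ t ∈ Set.Icc (0 : ℝ) L,
      ∫ ω, X s ω * Y t ω ∂P = 0)
    -- (v) cross moment of X with the product X·Y
    (hXXY : ∀ s ∈ Set.Icc (0 : ℝ) L, ∀ t ∈ Set.Icc (0 : ℝ) L,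
      ∫ ω, X s ω * (X t ω * Y t ω) ∂P =
        (1 / 2) * ε ^ 2 * t *
          ((1 / 6) * ε ^ 2 * min s t * β₀ + (1 / 24) * ε ^ 4 * (min s t) ^ 2))
    -- (vi) cross moment of Y with the product X·Y
    (hYXY : ∀ s ∈ Set.Icc (0 : ℝ) L, ∀ t ∈ Set.Icc (0 : ℝ) L,
      ∫ ω, Y s ω * (X t ω * Y t ω) ∂P = 0)
    -- (vii) covariance of the product X·Y
    (hXYXY : ∀ s t : ℝ, 0 ≤ s → s ≤ t → t ≤ L →
      ∫ ω, (X s ω * Y s ω) * (X t ω * Y t ω) ∂P =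
        (1 / 12) * ε ^ 4 * s ^ 2 * β₀ ^ 2 + (1 / 18) * ε ^ 6 * s ^ 3 * β₀
          + (1 / 144) * ε ^ 8 * s ^ 4
          + (1 / 4) * ε ^ 4 * s * t * ((1 / 6) * ε ^ 2 * s * β₀ + (1 / 24) * ε ^ 4 * s ^ 2))
    (N : Ω → ℝ)
    (hN : ∀ ω, N ω = 8 * α₀ * (∫ z in (0 : ℝ)..L, Y z ω)
      + 8 * β₀ * (∫ z in (0 : ℝ)..L, X z ω)
      + 8 * (∫ z in (0 : ℝ)..L, X z ω * Y z ω)) :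
    (∫ ω, (N ω) ^ 2 ∂P) - (∫ ω, N ω ∂P) ^ 2 =
      (32 / 3) * ε ^ 2 * L ^ 3 * α₀ ^ 2 * β₀ + (32 / 9) * ε ^ 2 * L ^ 3 * β₀ ^ 3
        + (16 / 3) * ε ^ 4 * L ^ 4 * α₀ ^ 2 + (32 / 9) * ε ^ 4 * L ^ 4 * β₀ ^ 2
        + (46 / 45) * ε ^ 6 * L ^ 5 * β₀ + (23 / 270) * ε ^ 8 * L ^ 6
        - 4 * ε ^ 4 * L ^ 4 * α₀ ^ 2 := by
  have memLp_of_sq : ∀ F : ℝ → Ω → ℝ, Measurable (uncurry F) →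
      Integrable (fun p : ℝ × Ω => F p.1 p.2 ^ 2) ((volume.restrict (Icc 0 L)).prod P) →
      MemLp (uncurry F) 2 ((volume.restrict (Icc 0 L)).prod P) :=
    fun F hm hsq => (memLp_two_iff_integrable_sq hm.aestronglyMeasurable).2 hsq
  have hX := memLp_of_sq X hXmeas hXsq
  have hY := memLp_of_sq Y hYmeas hYsq
  have hXY₂ := memLp_of_sq (fun z ω => X z ω * Y z ω) (hXmeas.mul hYmeas) hXYsq
  have hsymm : ∀ (F : ℝ → Ω → ℝ) s t, ∫ ω, F s ω * F t ω ∂P = ∫ ω, F t ω * F s ω ∂P :=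
    fun F s t => by simp only [mul_comm]
  have hN' : ∀ ω, N ω = 8 * β₀ * (∫ z in Icc 0 L, X z ω) + 8 * α₀ * (∫ z in Icc 0 L, Y z ω)
      + 8 * ∫ z in Icc 0 L, X z ω * Y z ω := fun ω => by
    rw [hN ω]
    simp only [intervalIntegral.integral_of_le hL.le, integral_Icc_eq_integral_Ioc]
    ring
  simp only [hN']
  have hIX := memLp_two_integral hX
  have hIY := memLp_two_integral hY
  have hIXY := memLp_two_integral hXY₂
  rw [integral_linear_combination_sq hIX hIY hIXY, integral_linear_combination
    (hIX.integrable one_le_two) (hIY.integrable one_le_two) (hIXY.integrable one_le_two)]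
  rw [integral_integral_mul_integral hX hX, integral_integral_mul_integral hY hY,
    integral_integral_mul_integral hXY₂ hXY₂, integral_integral_mul_integral hX hY,
    integral_integral_mul_integral hX hXY₂, integral_integral_mul_integral hY hXY₂,
    doubleIntegral_momentXX hL.le (hsymm X) hXX, doubleIntegral_momentYY hL.le (hsymm Y) hYY,
    doubleIntegral_momentXYXY hL.le (hsymm _) hXYXY, doubleIntegral_momentXXY hL.le hXXY,
    setIntegral_eq_zero_of_forall_eq_zero fun s hs =>
      setIntegral_eq_zero_of_forall_eq_zero fun t ht => hXY s hs t ht,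
    setIntegral_eq_zero_of_forall_eq_zero fun s hs =>
      setIntegral_eq_zero_of_forall_eq_zero fun t ht => hYXY s hs t ht]
  rw [← integral_integral_swap (hX.integrable one_le_two),
    ← integral_integral_swap (hY.integrable one_le_two),
    ← integral_integral_swap (hXY₂.integrable one_le_two),
    setIntegral_eq_zero_of_forall_eq_zero hXmean,
    setIntegral_eq_zero_of_forall_eq_zero fun z hz => hXY z hz z hz,
    setIntegral_congr_fun measurableSet_Icc hYmean, integral_Icc_eq_integral_Ioc,
    ← intervalIntegral.integral_of_le hL.le, intervalIntegral.integral_const_mul, integral_id]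
  ring

/-- Variance formula of Theorem 4 of the paper, conditioned on the input eigenvalue
`ζ(0) = α₀ + jβ₀`: the noise `N = 8α₀∫₀^L Y + 8β₀∫₀^L X + 8∫₀^L X·Y` in the log-magnitude
of the spectral amplitude has variance
`Var[N] = (32/3)ε²L³α₀²β₀ + (32/9)ε²L³β₀³ + (16/3)ε⁴L⁴α₀² + (32/9)ε⁴L⁴β₀²
  + (46/45)ε⁶L⁵β₀ + (23/270)ε⁸L⁶ − 4ε⁴L⁴α₀²`. -/
theorem spectral_amplitude_noise_variance
    {Ω : Type*} [MeasurableSpace Ω] (P : Measure Ω) [IsProbabilityMeasure P]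
    (L ε α₀ β₀ : ℝ) (hL : 0 < L) (hε : 0 < ε)
    (X Y : ℝ → Ω → ℝ)
    (hXmeas : Measurable (Function.uncurry X))
    (hYmeas : Measurable (Function.uncurry Y))
    (hXsq : Integrable (fun p : ℝ × Ω => (X p.1 p.2) ^ 2)
      ((volume.restrict (Set.Icc 0 L)).prod P))
    (hYsq : Integrable (fun p : ℝ × Ω => (Y p.1 p.2) ^ 2)
      ((volume.restrict (Set.Icc 0 L)).prod P))
    (hXYsq : Integrable (fun p : ℝ × Ω => (X p.1 p.2 * Y p.1 p.2) ^ 2)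
      ((volume.restrict (Set.Icc 0 L)).prod P))
    -- (i) means
    (hXmean : ∀ z ∈ Set.Icc (0 : ℝ) L, ∫ ω, X z ω ∂P = 0)
    (hYmean : ∀ z ∈ Set.Icc (0 : ℝ) L, ∫ ω, Y z ω ∂P = (1 / 2) * ε ^ 2 * z)
    -- (ii) covariance of X
    (hXX : ∀ s t : ℝ, 0 ≤ s → s ≤ t → t ≤ L →
      ∫ ω, X s ω * X t ω ∂P = (1 / 6) * ε ^ 2 * s * β₀ + (1 / 24) * ε ^ 4 * s ^ 2)
    -- (iii) covariance of Y
    (hYY : ∀ s t : ℝ, 0 ≤ s → s ≤ t → t ≤ L →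
      ∫ ω, Y s ω * Y t ω ∂P =
        (1 / 2) * ε ^ 2 * s * β₀ + (3 / 8) * ε ^ 4 * s ^ 2 + (1 / 4) * ε ^ 4 * s * (t - s))
    -- (iv) X and Y uncorrelated
    (hXY : ∀ s ∈ Set.Icc (0 : ℝ) L, ∀ t ∈ Set.Icc (0 : ℝ) L,
      ∫ ω, X s ω * Y t ω ∂P = 0)
    -- (v) cross moment of X with the product X·Y
    (hXXY : ∀ s ∈ Set.Icc (0 : ℝ) L, ∀ t ∈ Set.Icc (0 : ℝ) L,
      ∫ ω, X s ω * (X t ω * Y t ω) ∂P =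
        (1 / 2) * ε ^ 2 * t *
          ((1 / 6) * ε ^ 2 * min s t * β₀ + (1 / 24) * ε ^ 4 * (min s t) ^ 2))
    -- (vi) cross moment of Y with the product X·Y
    (hYXY : ∀ s ∈ Set.Icc (0 : ℝ) L, ∀ t ∈ Set.Icc (0 : ℝ) L,
      ∫ ω, Y s ω * (X t ω * Y t ω) ∂P = 0)
    -- (vii) covariance of the product X·Y
    (hXYXY : ∀ s t : ℝ, 0 ≤ s → s ≤ t → t ≤ L →
      ∫ ω, (X s ω * Y s ω) * (X t ω * Y t ω) ∂P =
        (1 / 12) * ε ^ 4 * s ^ 2 * β₀ ^ 2 + (1 / 18) * ε ^ 6 * s ^ 3 * β₀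
          + (1 / 144) * ε ^ 8 * s ^ 4
          + (1 / 4) * ε ^ 4 * s * t * ((1 / 6) * ε ^ 2 * s * β₀ + (1 / 24) * ε ^ 4 * s ^ 2))
    (N : Ω → ℝ)
    (hN : ∀ ω, N ω = 8 * α₀ * (∫ z in (0 : ℝ)..L, Y z ω)
      + 8 * β₀ * (∫ z in (0 : ℝ)..L, X z ω)
      + 8 * (∫ z in (0 : ℝ)..L, X z ω * Y z ω)) :
    (∫ ω, (N ω) ^ 2 ∂P) - (∫ ω, N ω ∂P) ^ 2 =
      (32 / 3) * ε ^ 2 * L ^ 3 * α₀ ^ 2 * β₀ + (32 / 9) * ε ^ 2 * L ^ 3 * β₀ ^ 3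
        + (16 / 3) * ε ^ 4 * L ^ 4 * α₀ ^ 2 + (32 / 9) * ε ^ 4 * L ^ 4 * β₀ ^ 2
        + (46 / 45) * ε ^ 6 * L ^ 5 * β₀ + (23 / 270) * ε ^ 8 * L ^ 6
        - 4 * ε ^ 4 * L ^ 4 * α₀ ^ 2 :=
  spectral_amplitude_noise_variance_general P L ε α₀ β₀ hL X Y hXmeas hYmeas hXsq hYsq hXYsq hXmean
    hYmean hXX hYY hXY hXXY hYXY hXYXY N hN
end
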